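/- Let G be a topological group, V a real vector space, and ι a map assigning to each v ∈ V a one-parameter subgroup ι(v) of G, such that ι(c·v)(s) = ι(v)(c·s) for all c, s ∈ ℝ and v ∈ V, and such that ι(v + w) = ι(v) + ι(w) in the Trotter sense for all v, w ∈ V. Then for every Hausdorff locally convex real topological vector space Y, every function φ : G → Y of class LUC¹, and every g ∈ G, the map V → Y, v ↦ (D_{ι(v)} φ)(g), is ℝ-linear. -/

import Mathlib

open Filter Topology Pointwise

/-- A one-parameter subgroup of a topological group `G`: a continuous homomorphism
from the additive group of reals into `G`. -/
structure OneParamSubgroup (G : Type*) [Group G] [TopologicalSpace G] where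
  toFun : ℝ → G
  continuous_toFun : Continuous toFun
  map_add : ∀ s t : ℝ, toFun (s + t) = toFun s * toFun t

/-- `X = X₁ + X₂` in the Trotter sense: `(X₁(t/n) X₂(t/n))^n → X(t)` uniformly on
compact subsets of `ℝ`. -/
def TrotterSum {G : Type*} [Group G] [TopologicalSpace G]
    (X X₁ X₂ : OneParamSubgroup G) : Prop :=
  ∀ K : Set ℝ, IsCompact K → ∀ W ∈ 𝓝 (1 : G), ∃ N : ℕ, ∀ n : ℕ, N ≤ n → ∀ t ∈ K,
    (X.toFun t)⁻¹ * (X₁.toFun (t / (n : ℝ)) * X₂.toFun (t / (n : ℝ))) ^ n ∈ W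

/-- `(D_X φ)(g)` exists and equals `z`. -/
def HasDirDerivAt {G Y : Type*} [Group G] [TopologicalSpace G]
    [AddCommGroup Y] [Module ℝ Y] [TopologicalSpace Y]
    (φ : G → Y) (X : OneParamSubgroup G) (g : G) (z : Y) : Prop :=
  Tendsto (fun t : ℝ => t⁻¹ • (φ (g * X.toFun t) - φ g)) (𝓝[≠] (0 : ℝ)) (𝓝 z)

/-- `φ : G → Y` is locally left uniformly continuous. -/
def LocallyLeftUC {G Y : Type*} [Group G] [TopologicalSpace G]
    [AddCommGroup Y] [TopologicalSpace Y] (φ : G → Y) : Prop :=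
  ∀ g₀ : G, ∃ V ∈ 𝓝 g₀, ∀ U ∈ 𝓝 (0 : Y), ∃ W ∈ 𝓝 (1 : G),
    ∀ x ∈ V, ∀ y ∈ V, x⁻¹ * y ∈ W → φ x - φ y ∈ U

/-- `φ` is of class LUC¹, with `D X g = (D_X φ)(g)`. -/
def IsLUC1 {G Y : Type*} [Group G] [TopologicalSpace G]
    [AddCommGroup Y] [Module ℝ Y] [TopologicalSpace Y]
    (φ : G → Y) (D : OneParamSubgroup G → G → Y) : Prop :=
  LocallyLeftUC φ ∧ (∀ X g, HasDirDerivAt φ X g (D X g)) ∧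
    ∀ X, LocallyLeftUC (D X)

/-!
Homogeneity is a change of variable in the difference quotient. For additivity, continuous
functionals separate the points of `Y`, so it suffices to treat a normed (indeed real) target.
Over a short time `t`, replace `X (t)` by the Trotter product `P ^ n`, `P = X₁ (t/n) X₂ (t/n)`;
once `n` is large this changes `φ (g X (t))` by at most `ε |t|`, as `φ` is continuous. The
increment of `φ` along `g, g P, …, g Pⁿ` telescopes into `2n` increments along `X₁` and `X₂`
of length `t/n`; by the mean value inequality each one is `(t/n) • D_{Xᵢ} φ (g)` up to
`ε |t/n|`, because the whole path stays near `g` (uniform Trotter convergence on compacts) and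
`D_{Xᵢ} φ` is continuous at `g`.
-/

lemma norm_sub_sub_nsmul_le {E : Type*} [SeminormedAddCommGroup E] (f : ℕ → E) (c : E) {r : ℝ}
    {n : ℕ} (h : ∀ k < n, ‖f (k + 1) - f k - c‖ ≤ r) : ‖f n - f 0 - n • c‖ ≤ n * r := by
  have htel : f n - f 0 - n • c = ∑ k ∈ Finset.range n, (f (k + 1) - f k - c) := by
    rw [Finset.sum_sub_distrib, Finset.sum_range_sub, Finset.sum_const, Finset.card_range]
  rw [htel]
  simpa using norm_sum_le_of_le (Finset.range n) fun k hk => h k (Finset.mem_range.1 hk)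

namespace OneParamSubgroup

variable {G : Type*} [Group G] [TopologicalSpace G]

@[simp]
lemma map_zero (X : OneParamSubgroup G) : X.toFun 0 = 1 :=
  mul_eq_left.1 (by rw [← X.map_add, add_zero] : X.toFun 0 * X.toFun 0 = X.toFun 0)

lemma tendsto_nhds_one (X : OneParamSubgroup G) : Tendsto X.toFun (𝓝 0) (𝓝 1) := by
  simpa using X.continuous_toFun.tendsto 0

lemma exists_forall_abs_le_mul_mem [ContinuousMul G] (X₁ X₂ : OneParamSubgroup G) {Θ : Set G}
    (hΘ : Θ ∈ 𝓝 1) : ∃ δ > 0, ∀ a b : ℝ, |a| ≤ δ → |b| ≤ δ → X₁.toFun a * X₂.toFun b ∈ Θ := by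
  have hlim : Tendsto (fun p : ℝ × ℝ => X₁.toFun p.1 * X₂.toFun p.2) (𝓝 0 ×ˢ 𝓝 0) (𝓝 1) := by
    simpa using (X₁.tendsto_nhds_one.comp tendsto_fst).mul (X₂.tendsto_nhds_one.comp tendsto_snd)
  obtain ⟨S, hS, hSΘ⟩ := mem_prod_self_iff.1 (hlim hΘ)
  obtain ⟨δ, hδ, hδS⟩ := Metric.nhds_basis_closedBall.mem_iff.1 hS
  exact ⟨δ, hδ, fun a b ha hb => hSΘ <|
    Set.mk_mem_prod (hδS (show a ∈ Metric.closedBall 0 δ by simpa using ha))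
      (hδS (show b ∈ Metric.closedBall 0 δ by simpa using hb))⟩

variable {E : Type*} [NormedAddCommGroup E] [NormedSpace ℝ E]

lemma hasDerivAt_comp {φ d : G → E} {X : OneParamSubgroup G}
    (hd : ∀ h, HasDirDerivAt φ X h (d h)) (h : G) (r : ℝ) :
    HasDerivAt (fun τ => φ (h * X.toFun τ)) (d (h * X.toFun r)) r := by
  rw [hasDerivAt_iff_tendsto_slope_zero]
  simpa only [HasDirDerivAt, X.map_add, mul_assoc] using hd (h * X.toFun r)

lemma norm_sub_sub_smul_le {φ d : G → E} {X : OneParamSubgroup G}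
    (hd : ∀ h, HasDirDerivAt φ X h (d h)) (h : G) {s ε : ℝ} {c : E}
    (hc : ∀ τ ∈ Set.uIcc 0 s, ‖d (h * X.toFun τ) - c‖ ≤ ε) :
    ‖φ (h * X.toFun s) - φ h - s • c‖ ≤ ε * |s| := by
  have hderiv : ∀ τ ∈ Set.uIcc 0 s, HasDerivWithinAt (fun τ => φ (h * X.toFun τ) - τ • c)
      (d (h * X.toFun τ) - c) (Set.uIcc 0 s) τ := fun τ _ => by
    simpa using ((hasDerivAt_comp hd h τ).fun_sub ((hasDerivAt_id τ).smul_const c)).hasDerivWithinAt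
  simpa [sub_right_comm] using (convex_uIcc 0 s).norm_image_sub_le_of_norm_hasDerivWithin_le
    hderiv hc Set.left_mem_uIcc Set.right_mem_uIcc

lemma norm_mul_mul_sub_sub_smul_le {φ d₁ d₂ : G → E} {X₁ X₂ : OneParamSubgroup G}
    (hd₁ : ∀ h, HasDirDerivAt φ X₁ h (d₁ h)) (hd₂ : ∀ h, HasDirDerivAt φ X₂ h (d₂ h))
    (h : G) {s ε : ℝ} {c₁ c₂ : E}
    (hc : ∀ τ ∈ Set.uIcc 0 s, ‖d₁ (h * X₁.toFun τ) - c₁‖ ≤ ε ∧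
      ‖d₂ (h * X₁.toFun s * X₂.toFun τ) - c₂‖ ≤ ε) :
    ‖φ (h * (X₁.toFun s * X₂.toFun s)) - φ h - s • (c₁ + c₂)‖ ≤ 2 * ε * |s| := by
  have h₁ := norm_sub_sub_smul_le hd₁ h fun τ hτ => (hc τ hτ).1
  have h₂ := norm_sub_sub_smul_le hd₂ (h * X₁.toFun s) fun τ hτ => (hc τ hτ).2
  calc _ = ‖(φ (h * X₁.toFun s * X₂.toFun s) - φ (h * X₁.toFun s) - s • c₂) +
        (φ (h * X₁.toFun s) - φ h - s • c₁)‖ := by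
        rw [mul_assoc]; congr 1; module
    _ ≤ _ := (norm_add_le _ _).trans (by linarith)

lemma norm_pow_sub_sub_smul_le {φ d₁ d₂ : G → E} {X₁ X₂ : OneParamSubgroup G}
    (hd₁ : ∀ h, HasDirDerivAt φ X₁ h (d₁ h)) (hd₂ : ∀ h, HasDirDerivAt φ X₂ h (d₂ h))
    (h : G) {s ε : ℝ} {n : ℕ} {c₁ c₂ : E}
    (hc : ∀ k < n, ∀ τ ∈ Set.uIcc 0 s,
      ‖d₁ (h * (X₁.toFun s * X₂.toFun s) ^ k * X₁.toFun τ) - c₁‖ ≤ ε ∧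
      ‖d₂ (h * (X₁.toFun s * X₂.toFun s) ^ k * X₁.toFun s * X₂.toFun τ) - c₂‖ ≤ ε) :
    ‖φ (h * (X₁.toFun s * X₂.toFun s) ^ n) - φ h - (n * s) • (c₁ + c₂)‖ ≤ n * (2 * ε * |s|) := by
  have := norm_sub_sub_nsmul_le (fun k => φ (h * (X₁.toFun s * X₂.toFun s) ^ k))
    (s • (c₁ + c₂)) fun k hk => by
      simpa only [pow_succ, mul_assoc] using norm_mul_mul_sub_sub_smul_le hd₁ hd₂ _ (hc k hk)
  simpa [mul_smul, ← Nat.cast_smul_eq_nsmul ℝ, mul_assoc] using this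

end OneParamSubgroup

namespace HasDirDerivAt

variable {G Y : Type*} [Group G] [TopologicalSpace G] [AddCommGroup Y] [Module ℝ Y]
  [TopologicalSpace Y] {φ : G → Y} {X : OneParamSubgroup G} {g : G} {z : Y}

lemma unique [T2Space Y] {z' : Y} (h : HasDirDerivAt φ X g z) (h' : HasDirDerivAt φ X g z') :
    z = z' :=
  tendsto_nhds_unique h h'

lemma continuousLinearMap_comp {F : Type*} [AddCommGroup F] [Module ℝ F] [TopologicalSpace F]
    (f : Y →L[ℝ] F) (h : HasDirDerivAt φ X g z) : HasDirDerivAt (f ∘ φ) X g (f z) := by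
  simpa [HasDirDerivAt, Function.comp_def] using (f.continuous.tendsto z).comp h

lemma rescale [ContinuousSMul ℝ Y] {X' : OneParamSubgroup G} (c : ℝ)
    (hX' : ∀ s, X'.toFun s = X.toFun (c * s)) (h : HasDirDerivAt φ X g z) :
    HasDirDerivAt φ X' g (c • z) := by
  rcases eq_or_ne c 0 with rfl | hc
  · simpa [HasDirDerivAt, hX'] using tendsto_const_nhds
  have hmaps : Set.MapsTo (c * ·) ({0}ᶜ : Set ℝ) {0}ᶜ := fun s hs => mul_ne_zero hc hs
  have hmul : Tendsto (c * ·) (𝓝[≠] 0) (𝓝[≠] 0) := by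
    simpa using ((continuous_const_mul c).continuousWithinAt (x := 0)).tendsto_nhdsWithin hmaps
  refine ((h.comp hmul).const_smul c).congr fun s => ?_
  simp only [Function.comp_apply, hX', smul_smul]
  congr 1
  field_simp

lemma of_eventually_norm_le {E : Type*} [NormedAddCommGroup E] [NormedSpace ℝ E]
    {φ : G → E} {z : E}
    (h : ∀ ε > 0, ∀ᶠ t in 𝓝 (0 : ℝ), ‖φ (g * X.toFun t) - φ g - t • z‖ ≤ ε * |t|) :
    HasDirDerivAt φ X g z := by
  refine Metric.tendsto_nhds.2 fun ε hε => ?_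
  filter_upwards [self_mem_nhdsWithin, nhdsWithin_le_nhds (h (ε / 2) (by positivity))]
    with t (ht : t ≠ 0) hle
  have hslope : t⁻¹ • (φ (g * X.toFun t) - φ g) - z = t⁻¹ • (φ (g * X.toFun t) - φ g - t • z) := by
    rw [smul_sub _ _ (t • z), smul_smul, inv_mul_cancel₀ ht, one_smul]
  rw [dist_eq_norm, hslope, norm_smul, norm_inv, Real.norm_eq_abs]
  calc |t|⁻¹ * ‖φ (g * X.toFun t) - φ g - t • z‖ ≤ |t|⁻¹ * (ε / 2 * |t|) := by gcongr
    _ < ε := by field_simp; linarith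

end HasDirDerivAt

lemma LocallyLeftUC.continuous {G Y : Type*} [Group G] [TopologicalSpace G] [IsTopologicalGroup G]
    [AddCommGroup Y] [TopologicalSpace Y] [IsTopologicalAddGroup Y] {f : G → Y}
    (hf : LocallyLeftUC f) : Continuous f := by
  refine continuous_iff_continuousAt.2 fun g₀ => ?_
  obtain ⟨V, hV, hUC⟩ := hf g₀
  rw [ContinuousAt, ← tendsto_sub_nhds_zero_iff]
  refine fun U hU => mem_map.2 ?_
  obtain ⟨W, hW, hfW⟩ := hUC U hU
  have hlim : Tendsto (fun y => y⁻¹ * g₀) (𝓝 g₀) (𝓝 1) :=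
    (continuous_inv.mul continuous_const).tendsto' g₀ 1 (inv_mul_cancel g₀)
  filter_upwards [hV, hlim.eventually_mem hW] with y hy hyW
  exact hfW y hy g₀ (mem_of_mem_nhds hV) hyW

namespace TrotterSum

variable {G : Type*} [Group G] [TopologicalSpace G] [ContinuousMul G]
  {X X₁ X₂ : OneParamSubgroup G}

lemma tendsto_pow (hT : TrotterSum X X₁ X₂) (t : ℝ) :
    Tendsto (fun n : ℕ => (X₁.toFun (t / n) * X₂.toFun (t / n)) ^ n) atTop (𝓝 (X.toFun t)) := by
  have hlim : Tendsto (fun n : ℕ => (X.toFun t)⁻¹ * (X₁.toFun (t / n) * X₂.toFun (t / n)) ^ n)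
      atTop (𝓝 1) := fun W hW =>
    let ⟨N, hN⟩ := hT {t} isCompact_singleton W hW
    eventually_atTop.2 ⟨N, fun n hn => hN n hn t rfl⟩
  simpa using hlim.const_mul (X.toFun t)

lemma eventually_pow_mem (hT : TrotterSum X X₁ X₂) {Θ : Set G} (hΘ : Θ ∈ 𝓝 1) :
    ∃ δ > 0, ∀ᶠ s in 𝓝 (0 : ℝ), ∀ k : ℕ, |(k : ℝ) * s| ≤ δ → (X₁.toFun s * X₂.toFun s) ^ k ∈ Θ := by
  obtain ⟨Θ₀, hΘ₀, hΘ₀1, hΘ₀Θ⟩ := exists_open_nhds_one_mul_subset hΘ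
  obtain ⟨δ, hδ, hXδ⟩ :=
    Metric.nhds_basis_closedBall.mem_iff.1 (X.tendsto_nhds_one (hΘ₀.mem_nhds hΘ₀1))
  obtain ⟨N, hN⟩ := hT _ (isCompact_closedBall 0 δ) Θ₀ (hΘ₀.mem_nhds hΘ₀1)
  have hshort : ∀ᶠ s in 𝓝 (0 : ℝ), ∀ k ∈ Finset.range N, (X₁.toFun s * X₂.toFun s) ^ k ∈ Θ := by
    refine (eventually_all_finset _).2 fun k _ => ?_
    have hlim : Tendsto (fun s => (X₁.toFun s * X₂.toFun s) ^ k) (𝓝 0) (𝓝 1) := by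
      simpa using (X₁.tendsto_nhds_one.mul X₂.tendsto_nhds_one).pow k
    exact hlim hΘ
  refine ⟨δ, hδ, hshort.mono fun s hs k hk => ?_⟩
  rcases lt_or_ge k N with hkN | hkN
  · exact hs k (Finset.mem_range.2 hkN)
  rcases eq_or_ne k 0 with rfl | hk0
  · simpa using mem_of_mem_nhds hΘ
  have hks : (k * s : ℝ) ∈ Metric.closedBall 0 δ := by simpa using hk
  -- The Trotter product at time `k * s` with `k` factors is `(X₁ s * X₂ s) ^ k`.
  have htrot := hN k hkN _ hks
  rw [mul_div_cancel_left₀ _ (Nat.cast_ne_zero.2 hk0)] at htrot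
  simpa using hΘ₀Θ (Set.mul_mem_mul (hXδ hks) htrot)

lemma eventually_pow_mul_mem (hT : TrotterSum X X₁ X₂) {Ω : Set G} (hΩ : Ω ∈ 𝓝 1) :
    ∃ δ > 0, ∀ᶠ s in 𝓝 (0 : ℝ), ∀ k : ℕ, |(k : ℝ) * s| ≤ δ → ∀ a b : ℝ, |a| ≤ |s| → |b| ≤ |s| →
      (X₁.toFun s * X₂.toFun s) ^ k * (X₁.toFun a * X₂.toFun b) ∈ Ω := by
  obtain ⟨Θ, hΘ, hΘ1, hΘΩ⟩ := exists_open_nhds_one_mul_subset hΩ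
  obtain ⟨δ, hδ, hpow⟩ := hT.eventually_pow_mem (hΘ.mem_nhds hΘ1)
  obtain ⟨δ', hδ', hstep⟩ := X₁.exists_forall_abs_le_mul_mem X₂ (hΘ.mem_nhds hΘ1)
  refine ⟨δ, hδ, ?_⟩
  filter_upwards [hpow, Metric.closedBall_mem_nhds 0 hδ'] with s hs hsδ' k hk a b ha hb
  have hs' : |s| ≤ δ' := by simpa using hsδ'
  exact hΘΩ (Set.mul_mem_mul (hs k hk) (hstep a b (ha.trans hs') (hb.trans hs')))

variable {E : Type*} [NormedAddCommGroup E] [NormedSpace ℝ E]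

lemma eventually_norm_sub_sub_smul_le (hT : TrotterSum X X₁ X₂) {φ d₁ d₂ : G → E}
    (hφ : Continuous φ) (hd₁ : ∀ h, HasDirDerivAt φ X₁ h (d₁ h))
    (hd₂ : ∀ h, HasDirDerivAt φ X₂ h (d₂ h)) {g : G} (hc₁ : ContinuousAt d₁ g)
    (hc₂ : ContinuousAt d₂ g) {ε : ℝ} (hε : 0 < ε) :
    ∀ᶠ t in 𝓝 (0 : ℝ), ‖φ (g * X.toFun t) - φ g - t • (d₁ g + d₂ g)‖ ≤ 3 * ε * |t| := by
  have hg : Tendsto (g * ·) (𝓝 1) (𝓝 g) := by simpa using (continuous_const_mul g).tendsto 1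
  have hΩ : ∀ᶠ ω in 𝓝 1, ‖d₁ (g * ω) - d₁ g‖ ≤ ε ∧ ‖d₂ (g * ω) - d₂ g‖ ≤ ε := by
    simpa [dist_eq_norm] using
      ((hc₁.tendsto.comp hg).eventually (Metric.closedBall_mem_nhds _ hε)).and
        ((hc₂.tendsto.comp hg).eventually (Metric.closedBall_mem_nhds _ hε))
  obtain ⟨δ, hδ, hpath⟩ := hT.eventually_pow_mul_mem hΩ
  filter_upwards [Metric.closedBall_mem_nhds 0 hδ] with t ht
  rcases eq_or_ne t 0 with rfl | ht0
  · simp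
  have hs : Tendsto (fun n : ℕ => t / n) atTop (𝓝 0) := tendsto_const_div_atTop_nhds_zero_nat t
  obtain ⟨n, hnpath, hnφ, hn⟩ := ((hs.eventually hpath).and
    ((((hφ.tendsto _).comp ((hT.tendsto_pow t).const_mul g)).eventually
      (Metric.closedBall_mem_nhds _ (by positivity : 0 < ε * |t|))).and
      (eventually_ge_atTop 1))).exists
  set s := t / n
  set P := X₁.toFun s * X₂.toFun s
  have hns : (n : ℝ) * s = t := mul_div_cancel₀ t (by positivity)
  have hsum := OneParamSubgroup.norm_pow_sub_sub_smul_le hd₁ hd₂ g (s := s) (ε := ε) (n := n)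
    fun k hk τ hτ => by
      have hkδ : |(k : ℝ) * s| ≤ δ := by
        calc |(k : ℝ) * s| ≤ |(n : ℝ) * s| := by
              rw [abs_mul, abs_mul, Nat.abs_cast, Nat.abs_cast]; gcongr
          _ ≤ δ := by simpa [hns] using ht
      have hτs : |τ| ≤ |s| := by simpa using Set.abs_sub_left_of_mem_uIcc hτ
      have h₁ := hnpath k hkδ τ 0 hτs (by simp)
      have h₂ := hnpath k hkδ s τ le_rfl hτs
      simp only [OneParamSubgroup.map_zero, mul_one] at h₁
      exact ⟨by simpa only [mul_assoc] using h₁.1, by simpa only [mul_assoc] using h₂.2⟩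
  rw [hns] at hsum
  have hφn : ‖φ (g * X.toFun t) - φ (g * P ^ n)‖ ≤ ε * |t| := by simpa [dist_eq_norm'] using hnφ
  calc ‖φ (g * X.toFun t) - φ g - t • (d₁ g + d₂ g)‖
      = ‖(φ (g * X.toFun t) - φ (g * P ^ n)) + (φ (g * P ^ n) - φ g - t • (d₁ g + d₂ g))‖ := by
        congr 1; abel
    _ ≤ ε * |t| + n * (2 * ε * |s|) := (norm_add_le _ _).trans (add_le_add hφn hsum)
    _ = 3 * ε * |t| := by rw [← hns, abs_mul, Nat.abs_cast]; ring

theorem hasDirDerivAt (hT : TrotterSum X X₁ X₂) {φ d₁ d₂ : G → E} (hφ : Continuous φ)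
    (hd₁ : ∀ h, HasDirDerivAt φ X₁ h (d₁ h)) (hd₂ : ∀ h, HasDirDerivAt φ X₂ h (d₂ h)) {g : G}
    (hc₁ : ContinuousAt d₁ g) (hc₂ : ContinuousAt d₂ g) :
    HasDirDerivAt φ X g (d₁ g + d₂ g) :=
  HasDirDerivAt.of_eventually_norm_le fun ε hε =>
    (hT.eventually_norm_sub_sub_smul_le hφ hd₁ hd₂ hc₁ hc₂ (by positivity : 0 < ε / 3)).mono
      fun t ht => ht.trans_eq (by ring)

end TrotterSum

theorem dirDeriv_linear
    {G Y V : Type*} [Group G] [TopologicalSpace G] [IsTopologicalGroup G]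
    [AddCommGroup Y] [Module ℝ Y] [TopologicalSpace Y] [IsTopologicalAddGroup Y]
    [ContinuousSMul ℝ Y] [LocallyConvexSpace ℝ Y] [T2Space Y]
    [AddCommGroup V] [Module ℝ V]
    (ι : V → OneParamSubgroup G)
    (hscal : ∀ (c : ℝ) (v : V) (s : ℝ), (ι (c • v)).toFun s = (ι v).toFun (c * s))
    (hadd : ∀ v w : V, TrotterSum (ι (v + w)) (ι v) (ι w))
    (φ : G → Y) (D : OneParamSubgroup G → G → Y) (hφ : IsLUC1 φ D) (g : G) :
    IsLinearMap ℝ (fun v : V => D (ι v) g) := by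
  obtain ⟨hφ, hD, hDluc⟩ := hφ
  refine ⟨fun v w => ?_, fun c v => (hD _ g).unique ((hD _ g).rescale c (hscal c v))⟩
  refine (SeparatingDual.eq_iff_forall_dual_eq (R := ℝ)).2 fun f => ?_
  have hsum := (hadd v w).hasDirDerivAt (g := g) (f.continuous.comp hφ.continuous)
    (fun h => (hD _ h).continuousLinearMap_comp f) (fun h => (hD _ h).continuousLinearMap_comp f)
    (f.continuous.comp (hDluc _).continuous).continuousAt
    (f.continuous.comp (hDluc _).continuous).continuousAt
  simpa using ((hD _ g).continuousLinearMap_comp f).unique hsum
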